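/- arXiv:2504.14646 — 2 statements merged into one kernel-verified Lean document; each statement's English description precedes it below -/
import Mathlib

section
/- Let Q be a right Bol loop of order 27 with |Z(Q)| = 3. If N is a normal subloop of Q such that Q/N is an abelian group — that is, for all x,y,z ∈ Q there exist n,m ∈ N with y·x = (x·y)·n and x·(y·z) = ((x·y)·z)·m — then Z(Q) ⊆ N. -/
/-- A loop: a set with binary operation and identity element in which all left and
right translations are bijective. -/
class QLoop (Q : Type*) extends Mul Q, One Q where
  one_mul : ∀ x : Q, 1 * x = x
  mul_one : ∀ x : Q, x * 1 = x
  bij_left : ∀ a : Q, Function.Bijective (fun x : Q => a * x)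
  bij_right : ∀ a : Q, Function.Bijective (fun x : Q => x * a)

/-- The right Bol identity. -/
def IsRightBol (Q : Type*) [QLoop Q] : Prop :=
  ∀ x y z : Q, ((x * y) * z) * y = x * ((y * z) * y)

/-- Left translation as a permutation. -/
noncomputable def Lt {Q : Type*} [QLoop Q] (a : Q) : Equiv.Perm Q :=
  Equiv.ofBijective (fun x : Q => a * x) (QLoop.bij_left a)

/-- Right translation as a permutation. -/
noncomputable def Rt {Q : Type*} [QLoop Q] (a : Q) : Equiv.Perm Q :=
  Equiv.ofBijective (fun x : Q => x * a) (QLoop.bij_right a)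

/-- The right multiplication group. -/
noncomputable def rightMultGroup (Q : Type*) [QLoop Q] : Subgroup (Equiv.Perm Q) :=
  Subgroup.closure (Set.range (Rt : Q → Equiv.Perm Q))

/-- The right inner mapping group, generated by R_{x,y} = R_{y x}⁻¹ ∘ R_x ∘ R_y. -/
noncomputable def rightInn (Q : Type*) [QLoop Q] : Subgroup (Equiv.Perm Q) :=
  Subgroup.closure { φ : Equiv.Perm Q | ∃ x y : Q, φ = (Rt (y * x))⁻¹ * Rt x * Rt y }

/-- The inner mapping group, generated by R_{x,y}, L_{x,y} and T_x. -/
noncomputable def innGroup (Q : Type*) [QLoop Q] : Subgroup (Equiv.Perm Q) :=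
  Subgroup.closure
    ({ φ : Equiv.Perm Q | ∃ x y : Q, φ = (Rt (y * x))⁻¹ * Rt x * Rt y } ∪
     { φ : Equiv.Perm Q | ∃ x y : Q, φ = (Lt (x * y))⁻¹ * Lt x * Lt y } ∪
     { φ : Equiv.Perm Q | ∃ x : Q, φ = (Lt x)⁻¹ * Rt x })

/-- A subloop: contains 1, closed under multiplication and both divisions. -/
structure IsSubloop {Q : Type*} [QLoop Q] (S : Set Q) : Prop where
  one_mem : (1 : Q) ∈ S
  mul_mem : ∀ ⦃a b : Q⦄, a ∈ S → b ∈ S → a * b ∈ S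
  ldiv_mem : ∀ ⦃a x : Q⦄, a ∈ S → a * x ∈ S → x ∈ S
  rdiv_mem : ∀ ⦃a y : Q⦄, a ∈ S → y * a ∈ S → y ∈ S

/-- A normal subloop: a subloop invariant under all inner mappings. -/
def IsNormalSubloop {Q : Type*} [QLoop Q] (S : Set Q) : Prop :=
  IsSubloop S ∧ ∀ φ ∈ innGroup Q, (φ : Equiv.Perm Q) '' S = S

/-- The commutant. -/
def commutant (Q : Type*) [QLoop Q] : Set Q := { a : Q | ∀ y : Q, a * y = y * a }

/-- The left nucleus. -/
def leftNucleus (Q : Type*) [QLoop Q] : Set Q :=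
  { a : Q | ∀ y z : Q, a * (y * z) = (a * y) * z }

/-- The center. -/
def loopCenter (Q : Type*) [QLoop Q] : Set Q :=
  { a : Q | ∀ y z : Q, a * y = y * a ∧ a * (y * z) = (a * y) * z ∧
      y * (a * z) = (y * a) * z ∧ y * (z * a) = (y * z) * a }

/-- Powers: x^0 = 1, x^{n+1} = x^n * x. -/
def lpow {Q : Type*} [QLoop Q] (x : Q) : ℕ → Q
  | 0 => 1
  | n + 1 => lpow x n * x

/-- The subloop generated by an element. -/
def subloopClosure {Q : Type*} [QLoop Q] (x : Q) : Set Q :=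
  ⋂₀ { S : Set Q | IsSubloop S ∧ x ∈ S }

/-- Power associativity: the subloop generated by any element is associative. -/
def PowerAssociative (Q : Type*) [QLoop Q] : Prop :=
  ∀ x : Q, ∀ a ∈ subloopClosure x, ∀ b ∈ subloopClosure x, ∀ c ∈ subloopClosure x,
    a * (b * c) = (a * b) * c

/-!
The central quotient `Q / Z(Q)` is a right Bol loop of order `9`, and such a loop is an abelian
group. In a right Bol loop `R_{x^n} = R_x ^ n`, and `⟨R_x⟩` acts freely, so the order of `x`
divides the order of the loop. If some element has order `9` the loop is cyclic. Otherwise it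
has exponent `3`; then `R_w R_v R_w R_v R_w = R_v ^ 2`, and with coordinates `a ^ i * b ^ j` this
identity forces right multiplication by `a` to shift the first coordinate, so the loop is
`ZMod 3 × ZMod 3`.

Hence every commutator and associator of `Q` is central, and by hypothesis it is also the
corresponding element of `N`. As `Q` is not an abelian group, `Z(Q) ∩ N` contains some `t ≠ 1`.
The order of `t` divides `27` and is at most `|Z(Q)| = 3`, so it is `3` and the powers of `t`,
which lie in `N`, exhaust `Z(Q)`.
-/

instance QLoop.toMulOneClass {Q : Type*} [QLoop Q] : MulOneClass Q where
  one_mul := QLoop.one_mul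
  mul_one := QLoop.mul_one

instance QLoop.toIsCancelMul {Q : Type*} [QLoop Q] : IsCancelMul Q where
  mul_left_cancel a := (QLoop.bij_left a).1
  mul_right_cancel a := (QLoop.bij_right a).1

section Translations

variable {B : Type*} [QLoop B]

@[simp] lemma Rt_apply (a x : B) : Rt a x = x * a := rfl

lemma Rt_one : Rt (1 : B) = 1 := Equiv.ext mul_one

lemma Rt_injective : Function.Injective (Rt : B → Equiv.Perm B) := fun a b h => by
  simpa using congrArg (· 1) h

lemma lpow_one (x : B) : lpow x 1 = x := one_mul x

lemma lpow_add_eq_Rt_pow_apply (x : B) (m : ℕ) : ∀ n, lpow x (m + n) = (Rt x ^ n) (lpow x m)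
  | 0 => rfl
  | n + 1 => by rw [← add_assoc, lpow, lpow_add_eq_Rt_pow_apply x m n, pow_succ']; rfl

lemma lpow_eq_Rt_pow_apply_one (x : B) (n : ℕ) : lpow x n = (Rt x ^ n) 1 := by
  simpa [lpow] using lpow_add_eq_Rt_pow_apply x 0 n

end Translations

lemma comm_assoc_of_surjective {M B : Type*} [AddCommSemigroup M] [Mul B] {f : M → B}
    (hf : Function.Surjective f) (hadd : ∀ p q, f (p + q) = f p * f q) :
    (∀ u v : B, u * v = v * u) ∧ ∀ u v w : B, u * (v * w) = u * v * w := by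
  refine ⟨fun u v => ?_, fun u v w => ?_⟩
  · obtain ⟨p, rfl⟩ := hf u
    obtain ⟨q, rfl⟩ := hf v
    rw [← hadd, ← hadd, add_comm]
  · obtain ⟨p, rfl⟩ := hf u
    obtain ⟨q, rfl⟩ := hf v
    obtain ⟨r, rfl⟩ := hf w
    rw [← hadd, ← hadd, ← hadd, ← hadd, add_assoc]

namespace IsRightBol

variable {B : Type*} [QLoop B] (hbol : IsRightBol B)
include hbol

lemma Rt_mul_Rt_mul_Rt (y z : B) : Rt y * Rt z * Rt y = Rt (y * z * y) :=
  Equiv.ext fun x => hbol x y z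

lemma Rt_lpow (x : B) : ∀ n, Rt (lpow x n) = Rt x ^ n
  | 0 => Rt_one
  | 1 => by rw [lpow_one, pow_one]
  | n + 2 => by
    have hx : x * lpow x n = lpow x (1 + n) := by
      rw [lpow_add_eq_Rt_pow_apply, lpow_one, ← Rt_lpow x n, Rt_apply]
    rw [lpow, ← add_comm 1 n, ← hx, ← Rt_mul_Rt_mul_Rt hbol, Rt_lpow x n]
    group

lemma lpow_add (x : B) (m n : ℕ) : lpow x (m + n) = lpow x m * lpow x n := by
  rw [lpow_add_eq_Rt_pow_apply, ← hbol.Rt_lpow, Rt_apply]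

lemma lpow_eq_lpow_iff (x : B) {m n : ℕ} :
    lpow x m = lpow x n ↔ m % orderOf (Rt x) = n % orderOf (Rt x) := by
  rw [← pow_inj_mod, ← hbol.Rt_lpow, ← hbol.Rt_lpow, Rt_injective.eq_iff]

lemma lpow_eq_one_iff (x : B) {n : ℕ} : lpow x n = 1 ↔ orderOf (Rt x) ∣ n := by
  rw [orderOf_dvd_iff_pow_eq_one, ← hbol.Rt_lpow, ← Rt_one, Rt_injective.eq_iff]

lemma Rt_pow_apply (x u : B) (n : ℕ) : (Rt x ^ n) u = u * lpow x n := by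
  rw [← hbol.Rt_lpow, Rt_apply]

/-- `zpowers (Rt x)` acts freely on `B`. -/
lemma orderOf_Rt_dvd_card [Finite B] (x : B) : orderOf (Rt x) ∣ Nat.card B := by
  have hfree : ∀ u : B, MulAction.stabilizer (Subgroup.zpowers (Rt x)) u = ⊥ := by
    intro u
    refine (Subgroup.eq_bot_iff_forall _).2 fun ⟨g, hg⟩ hgu => ?_
    obtain ⟨n, rfl⟩ := mem_powers_iff_mem_zpowers.2 hg
    have hn : u * lpow x n = u * 1 := by
      rw [mul_one, ← hbol.Rt_pow_apply]; exact hgu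
    rw [Subgroup.mk_eq_one]
    change Rt x ^ n = 1
    rw [← hbol.Rt_lpow, mul_left_cancel hn, Rt_one]
  rw [Nat.card_congr (MulAction.selfEquivOrbitsQuotientProd hfree), Nat.card_prod,
    Nat.card_zpowers]
  exact dvd_mul_left _ _

lemma ncard_range_lpow [Finite B] (x : B) : (Set.range (lpow x)).ncard = orderOf (Rt x) := by
  have hpos : 0 < orderOf (Rt x) := orderOf_pos _
  have hrange : Set.range (lpow x) = Set.range fun i : Fin (orderOf (Rt x)) => lpow x i := by
    refine le_antisymm ?_ (Set.range_comp_subset_range _ _)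
    rintro _ ⟨n, rfl⟩
    refine ⟨⟨n % orderOf (Rt x), Nat.mod_lt _ hpos⟩, (hbol.lpow_eq_lpow_iff x).2 ?_⟩
    exact Nat.mod_mod _ _
  rw [hrange, Set.ncard_range_of_injective, Nat.card_fin]
  intro i j hij
  have := (hbol.lpow_eq_lpow_iff x).1 hij
  rwa [Nat.mod_eq_of_lt i.2, Nat.mod_eq_of_lt j.2, Fin.val_inj] at this

lemma comm_assoc_of_orderOf_Rt_eq_card [Finite B] (x : B) (hx : orderOf (Rt x) = Nat.card B) :
    (∀ u v : B, u * v = v * u) ∧ ∀ u v w : B, u * (v * w) = u * v * w := by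
  have hrange : Set.range (lpow x) = Set.univ := Set.eq_of_subset_of_ncard_le
    (Set.subset_univ _) (by rw [Set.ncard_univ, hbol.ncard_range_lpow, hx]) (Set.toFinite _)
  exact comm_assoc_of_surjective (Set.range_eq_univ.1 hrange) (hbol.lpow_add x)

end IsRightBol

lemma ZMod.cases_three (n : ZMod 3) : n = 0 ∨ n = 1 ∨ n = 2 := by
  revert n; decide

lemma ZMod.neg_add_neg_self_three (l : ZMod 3) : -l + -l = l := by
  revert l; decide

lemma ZMod.eq_add_one_of_ne_three {i m : ZMod 3} (h0 : m ≠ i) (h2 : m ≠ i + 2) : m = i + 1 := by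
  revert i m; decide

/-- In the coordinates `a ^ i * b ^ j`, `σ` is right multiplication by `a`, and `hkey` is the
identity `R_b R_a R_b R_a R_b = R_a ^ 2` evaluated on the column `j = 0`. -/
lemma eq_add_of_shift_on_zero_column (σ : ZMod 3 × ZMod 3 → ZMod 3 × ZMod 3)
    (hinj : σ.Injective) (hfix : ∀ p, σ p ≠ p) (hzero : ∀ i, σ (i, 0) = (i + 1, 0))
    (hkey : ∀ i, σ (σ ((i, 0) + (0, 1)) + (0, 1)) + (0, 1) = (i + 2, 0))
    (p : ZMod 3 × ZMod 3) : σ p = p + (1, 0) := by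
  have hone : ∀ i, σ (i, 1) = (i + 1, 1) ∧ σ (i + 1, 2) = (i + 2, 2) := by
    intro i
    have hk := hkey i
    rcases hσ : σ (i, 1) with ⟨m, n⟩
    simp only [Prod.mk_add_mk, add_zero, zero_add, hσ] at hk
    rcases ZMod.cases_three n with rfl | rfl | rfl
    · have := hinj (hσ.trans (by rw [hzero, sub_add_cancel]))
      simp at this
    · have h2 : σ (m, 2) = (i + 2, 2) := by
        rw [show (1 : ZMod 3) + 1 = 2 from rfl] at hk
        rw [eq_sub_of_add_eq hk, Prod.mk_sub_mk, sub_zero]; rfl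
      obtain rfl : m = i + 1 := ZMod.eq_add_one_of_ne_three (fun h => hfix (i, 1) (by rw [hσ, h]))
        (fun h => hfix (m, 2) (by rw [h2, h]))
      exact ⟨rfl, h2⟩
    · rw [show (2 : ZMod 3) + 1 = 0 from rfl, hzero, Prod.mk_add_mk, Prod.ext_iff] at hk
      exact absurd hk.2 (by simp)
  obtain ⟨i, j⟩ := p
  rcases ZMod.cases_three j with rfl | rfl | rfl
  · simpa using hzero i
  · simpa using (hone i).1
  · rw [Prod.mk_add_mk, add_zero, ← sub_add_cancel i 1, (hone (i - 1)).2]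
    congr 1; ring

lemma pow_mul_pow_zmod_val {G : Type*} [Monoid G] {g : G} (hg : g ^ 3 = 1) (n : ℕ)
    (i : ZMod 3) : g ^ n * g ^ i.val = g ^ (i + n).val := by
  rw [← pow_add, pow_eq_pow_mod _ hg, ZMod.val_add, ZMod.val_natCast, Nat.add_mod_mod, add_comm]

/-- The element `a ^ i * b ^ j`. -/
noncomputable def coord {B : Type*} [QLoop B] (a b : B) (p : ZMod 3 × ZMod 3) : B :=
  (Rt b ^ p.2.val * Rt a ^ p.1.val) 1

namespace IsRightBol

variable {B : Type*} [QLoop B] (hbol : IsRightBol B)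
include hbol

lemma Rt_coord_zero_snd (a b : B) (j : ZMod 3) : Rt (coord a b (0, j)) = Rt b ^ j.val := by
  rw [coord, ZMod.val_zero, pow_zero, mul_one, ← lpow_eq_Rt_pow_apply_one, hbol.Rt_lpow]

lemma Rt_coord_fst_zero (a b : B) (i : ZMod 3) : Rt (coord a b (i, 0)) = Rt a ^ i.val := by
  rw [coord, ZMod.val_zero, pow_zero, one_mul, ← lpow_eq_Rt_pow_apply_one, hbol.Rt_lpow]

lemma coord_eq_lpow_mul_lpow (a b : B) (p : ZMod 3 × ZMod 3) :
    coord a b p = lpow a p.1.val * lpow b p.2.val := by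
  rw [coord, Equiv.Perm.mul_apply, ← lpow_eq_Rt_pow_apply_one, hbol.Rt_pow_apply]

section ExponentThree

variable (h3 : ∀ y : B, lpow y 3 = 1) {a b : B}
include h3

lemma Rt_pow_three (x : B) : Rt x ^ 3 = 1 := by
  rw [← hbol.Rt_lpow, h3, Rt_one]

lemma orderOf_Rt_eq_three (ha : a ≠ 1) : orderOf (Rt a) = 3 :=
  orderOf_eq_prime (hbol.Rt_pow_three h3 a) fun h => ha (Rt_injective (h.trans Rt_one.symm))

lemma lpow_val_add (x : B) (i j : ZMod 3) : lpow x (i + j).val = lpow x i.val * lpow x j.val := by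
  rw [← hbol.lpow_add, hbol.lpow_eq_lpow_iff, ZMod.val_add,
    Nat.mod_mod_of_dvd _ (orderOf_dvd_of_pow_eq_one (hbol.Rt_pow_three h3 x))]

lemma lpow_val_ne_lpow (hb : ∀ n, lpow a n ≠ b) {m : ZMod 3} (hm : m ≠ 0) (n : ℕ) :
    lpow b m.val ≠ lpow a n := by
  intro h
  apply hb (n * m.val)
  apply Rt_injective
  -- `m * m = 1` in `ZMod 3`, so `b` is the `m`-th power of `b ^ m`.
  have hm2 : ∀ m : ZMod 3, m ≠ 0 → m.val * m.val % 3 = 1 := by decide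
  rw [hbol.Rt_lpow, pow_mul, ← hbol.Rt_lpow, ← h, hbol.Rt_lpow, ← pow_mul,
    pow_eq_pow_mod _ (hbol.Rt_pow_three h3 b), hm2 m hm, pow_one]

lemma Rt_mul_Rt_mul_Rt_mul_Rt_mul_Rt (v w : B) :
    Rt w * Rt v * Rt w * Rt v * Rt w = Rt v ^ 2 := by
  have hA := hbol.Rt_pow_three h3 v
  have hC : (Rt v ^ 2 * Rt w * Rt v ^ 2) ^ 3 = 1 := by
    rw [← hbol.Rt_lpow, hbol.Rt_mul_Rt_mul_Rt, ← hbol.Rt_lpow, h3, Rt_one]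
  calc Rt w * Rt v * Rt w * Rt v * Rt w
      = Rt w * (Rt v * Rt v ^ 3) * Rt w * (Rt v * Rt v ^ 3) * Rt w := by rw [hA, mul_one]
    _ = (Rt v ^ 2)⁻¹ * (Rt v ^ 2 * Rt w * Rt v ^ 2) ^ 3 * (Rt v ^ 2)⁻¹ := by
      rw [pow_three' (Rt v ^ 2 * Rt w * Rt v ^ 2)]; group
    _ = Rt v ^ 2 * (Rt v ^ 3)⁻¹ * (Rt v ^ 3)⁻¹ := by rw [hC]; group
    _ = Rt v ^ 2 := by rw [hA]; group

lemma Rt_pow_coord_snd (n : ℕ) (p : ZMod 3 × ZMod 3) :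
    (Rt b ^ n) (coord a b p) = coord a b (p + (0, (n : ZMod 3))) := by
  rw [coord, coord, ← Equiv.Perm.mul_apply, ← mul_assoc,
    pow_mul_pow_zmod_val (hbol.Rt_pow_three h3 b)]
  simp

lemma Rt_pow_coord_fst_zero (n : ℕ) (i : ZMod 3) :
    (Rt a ^ n) (coord a b (i, 0)) = coord a b (i + n, 0) := by
  simp only [coord, ZMod.val_zero, pow_zero, one_mul]
  rw [← Equiv.Perm.mul_apply, pow_mul_pow_zmod_val (hbol.Rt_pow_three h3 a)]

lemma coord_injective (ha : a ≠ 1) (hb : ∀ n, lpow a n ≠ b) : (coord a b).Injective := by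
  rintro ⟨i, j⟩ ⟨k, l⟩ h
  have h1 := congrArg (Rt b ^ (-l).val) h
  rw [hbol.Rt_pow_coord_snd h3, hbol.Rt_pow_coord_snd h3, ZMod.natCast_zmod_val] at h1
  simp only [Prod.mk_add_mk, add_zero, add_neg_cancel] at h1
  rw [hbol.coord_eq_lpow_mul_lpow, hbol.coord_eq_lpow_mul_lpow, ZMod.val_zero, lpow, mul_one,
    ← add_sub_cancel i k, hbol.lpow_val_add h3 a i] at h1
  have h2 := mul_left_cancel h1
  by_cases hjl : j + -l = 0
  · rw [hjl, ZMod.val_zero, lpow, eq_comm, hbol.lpow_eq_one_iff, hbol.orderOf_Rt_eq_three h3 ha]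
      at h2
    have hki := (ZMod.val_eq_zero _).1 (Nat.eq_zero_of_dvd_of_lt h2 (ZMod.val_lt _))
    rw [Prod.mk.injEq, ← sub_eq_zero (a := i), ← add_neg_eq_zero (a := j), ← neg_sub, hki, neg_zero]
    exact ⟨rfl, hjl⟩
  · exact absurd h2 (hbol.lpow_val_ne_lpow h3 hb hjl _)

lemma Rt_coord (hbij : (coord a b).Bijective) (ha : a ≠ 1) (p : ZMod 3 × ZMod 3) :
    Rt a (coord a b p) = coord a b (p + (1, 0)) := by
  let E := Equiv.ofBijective _ hbij
  let σ q := E.symm (Rt a (E q))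
  have hσ (q) : coord a b (σ q) = Rt a (coord a b q) := E.apply_symm_apply _
  have hτ (q) : coord a b (q + (0, 1)) = Rt b (coord a b q) := by
    simpa using (hbol.Rt_pow_coord_snd h3 1 q).symm
  have hzero (i : ZMod 3) : coord a b (i + 1, 0) = Rt a (coord a b (i, 0)) := by
    simpa using (hbol.Rt_pow_coord_fst_zero h3 1 i).symm
  have hshift := eq_add_of_shift_on_zero_column σ
    (E.symm.injective.comp ((Rt a).injective.comp E.injective))
    (fun q hq => ha <| mul_left_cancel (a := coord a b q) <| by
      rw [mul_one, ← Rt_apply, ← hσ, hq])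
    (fun i => hbij.1 <| by rw [hσ, ← hzero])
    (fun i => hbij.1 <| by
      have hkey := congrArg (· (coord a b (i, 0))) (hbol.Rt_mul_Rt_mul_Rt_mul_Rt_mul_Rt h3 a b)
      simp only [Equiv.Perm.mul_apply] at hkey
      rw [hτ, hσ, hτ, hσ, hτ, hkey, hbol.Rt_pow_coord_fst_zero h3, Nat.cast_ofNat])
  rw [← hσ, hshift]

lemma Rt_pow_coord (hbij : (coord a b).Bijective) (ha : a ≠ 1) (n : ℕ) (p : ZMod 3 × ZMod 3) :
    (Rt a ^ n) (coord a b p) = coord a b (p + ((n : ZMod 3), 0)) := by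
  induction n with
  | zero => simp [Prod.mk_zero_zero]
  | succ n ih =>
    rw [pow_succ', Equiv.Perm.mul_apply, ih, hbol.Rt_coord h3 hbij ha, add_assoc]
    congr 2
    ext <;> simp

lemma coord_mul_coord (hbij : (coord a b).Bijective) (ha : a ≠ 1) (p q : ZMod 3 × ZMod 3) :
    coord a b p * coord a b q = coord a b (p + q) := by
  obtain ⟨k, l⟩ := q
  have hq : coord a b (k, l) = coord a b (0, -l) * coord a b (k, 0) * coord a b (0, -l) := by
    rw [← Rt_apply, ← Rt_apply, hbol.Rt_coord_fst_zero, hbol.Rt_coord_zero_snd,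
      hbol.Rt_pow_coord h3 hbij ha, hbol.Rt_pow_coord_snd h3, ZMod.natCast_zmod_val,
      ZMod.natCast_zmod_val]
    congr 1
    ext <;> simp [ZMod.neg_add_neg_self_three]
  rw [hq, ← Rt_apply, ← hbol.Rt_mul_Rt_mul_Rt, hbol.Rt_coord_fst_zero, hbol.Rt_coord_zero_snd]
  simp only [Equiv.Perm.mul_apply]
  rw [hbol.Rt_pow_coord_snd h3, hbol.Rt_pow_coord h3 hbij ha, hbol.Rt_pow_coord_snd h3]
  simp only [ZMod.natCast_zmod_val]
  congr 1
  ext <;> simp [add_assoc, ZMod.neg_add_neg_self_three]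

end ExponentThree

lemma comm_assoc_of_lpow_three [Finite B] (h3 : ∀ y : B, lpow y 3 = 1) (h9 : Nat.card B = 9) :
    (∀ u v : B, u * v = v * u) ∧ ∀ u v w : B, u * (v * w) = u * v * w := by
  have : Nontrivial B := Finite.one_lt_card_iff_nontrivial.1 (by omega)
  obtain ⟨a, ha⟩ := exists_ne (1 : B)
  have hrange : Set.range (lpow a) ≠ Set.univ := fun h => by
    have := hbol.ncard_range_lpow a
    rw [h, Set.ncard_univ, h9, hbol.orderOf_Rt_eq_three h3 ha] at this
    omega
  obtain ⟨b, hb⟩ := (Set.ne_univ_iff_exists_notMem _).1 hrange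
  have hbij : (coord a b).Bijective := (hbol.coord_injective h3 ha fun n hn => hb ⟨n, hn⟩)
    |>.bijective_of_nat_card_le (by simp [h9])
  exact comm_assoc_of_surjective hbij.2 fun p q => (hbol.coord_mul_coord h3 hbij ha p q).symm

theorem comm_assoc_of_card_eq_nine (h9 : Nat.card B = 9) :
    (∀ u v : B, u * v = v * u) ∧ ∀ u v w : B, u * (v * w) = u * v * w := by
  have : Finite B := Nat.finite_of_card_ne_zero (by omega)
  by_cases hcyc : ∃ x : B, orderOf (Rt x) = 9
  · obtain ⟨x, hx⟩ := hcyc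
    exact hbol.comm_assoc_of_orderOf_Rt_eq_card x (hx.trans h9.symm)
  · refine hbol.comm_assoc_of_lpow_three (fun y => ?_) h9
    have hdvd := hbol.orderOf_Rt_dvd_card y
    rw [h9] at hdvd
    rw [hbol.lpow_eq_one_iff]
    have h9' : orderOf (Rt y) ≠ 9 := fun h => hcyc ⟨y, h⟩
    generalize orderOf (Rt y) = d at hdvd h9' ⊢
    have : d ≤ 9 := Nat.le_of_dvd (by norm_num) hdvd
    interval_cases d <;> simp_all

end IsRightBol

namespace loopCenter

variable {Q : Type*} [QLoop Q] {c d : Q}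

lemma comm (hc : c ∈ loopCenter Q) (y : Q) : c * y = y * c := (hc y 1).1

lemma assoc_left (hc : c ∈ loopCenter Q) (y z : Q) : c * (y * z) = c * y * z := (hc y z).2.1

lemma assoc_mid (hc : c ∈ loopCenter Q) (y z : Q) : y * (c * z) = y * c * z := (hc y z).2.2.1

lemma assoc_right (hc : c ∈ loopCenter Q) (y z : Q) : y * (z * c) = y * z * c :=
  (hc y z).2.2.2

lemma one_mem : (1 : Q) ∈ loopCenter Q := fun y z => by simp

lemma mul_mem (hc : c ∈ loopCenter Q) (hd : d ∈ loopCenter Q) : c * d ∈ loopCenter Q := by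
  intro y z
  refine ⟨?_, ?_, ?_, ?_⟩
  · rw [← assoc_left hc, comm hd, assoc_left hc, comm hc, assoc_mid hc]
  · rw [← assoc_left hc, ← assoc_left hc, assoc_left hd, assoc_left hc]
  · rw [← assoc_left hc, assoc_mid hc, assoc_mid hd, assoc_mid hc]
  · rw [assoc_mid hc z d, assoc_right hd, assoc_right hc, ← assoc_mid hc]

lemma exists_mul_eq_one [Finite Q] (hc : c ∈ loopCenter Q) : ∃ d ∈ loopCenter Q, c * d = 1 := by
  have hinj : Function.Injective fun z : loopCenter Q => (⟨c * z, mul_mem hc z.2⟩ : loopCenter Q) :=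
    fun z w h => Subtype.ext (mul_left_cancel (congrArg Subtype.val h))
  obtain ⟨⟨d, hd⟩, hcd⟩ := Finite.injective_iff_surjective.1 hinj ⟨1, one_mem⟩
  exact ⟨d, hd, congrArg Subtype.val hcd⟩

lemma mul_mul_eq_self (hc : c ∈ loopCenter Q) (hcd : c * d = 1) (y : Q) : y * c * d = y := by
  rw [← assoc_mid hc, hcd, mul_one]

lemma mul_mul_eq_mul_mul (hc : c ∈ loopCenter Q) (hd : d ∈ loopCenter Q) (x y : Q) :
    x * c * (y * d) = x * y * (c * d) := by
  rw [← assoc_mid hc, assoc_left hc, comm hc,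
    ← assoc_mid hc, assoc_right (mul_mem hc hd)]

lemma eq_univ_of_comm_assoc (hcomm : ∀ x y : Q, x * y = y * x)
    (hassoc : ∀ x y z : Q, x * (y * z) = x * y * z) : loopCenter Q = Set.univ :=
  Set.eq_univ_of_forall fun c y z => ⟨hcomm c y, hassoc c y z, hassoc y c z, hassoc y z c⟩

end loopCenter

def centerSetoid (Q : Type*) [QLoop Q] [Finite Q] : Setoid Q where
  r x y := ∃ c ∈ loopCenter Q, x = y * c
  iseqv.refl x := ⟨1, loopCenter.one_mem, (mul_one x).symm⟩
  iseqv.symm := by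
    rintro x y ⟨c, hc, rfl⟩
    obtain ⟨d, hd, hcd⟩ := loopCenter.exists_mul_eq_one hc
    exact ⟨d, hd, (loopCenter.mul_mul_eq_self hc hcd y).symm⟩
  iseqv.trans := by
    rintro x y z ⟨c, hc, rfl⟩ ⟨d, hd, rfl⟩
    exact ⟨d * c, loopCenter.mul_mem hd hc, (loopCenter.assoc_mid hd z c).symm⟩

def CenterQuotient (Q : Type*) [QLoop Q] [Finite Q] : Type _ := Quotient (centerSetoid Q)

namespace CenterQuotient

variable {Q : Type*} [QLoop Q] [Finite Q]

def mk (x : Q) : CenterQuotient Q := Quotient.mk (centerSetoid Q) x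

lemma mk_eq_mk {x y : Q} : mk x = mk y ↔ ∃ c ∈ loopCenter Q, x = y * c := Quotient.eq

lemma ind {P : CenterQuotient Q → Prop} (h : ∀ x, P (mk x)) (q : CenterQuotient Q) : P q :=
  Quotient.ind h q

noncomputable instance : QLoop (CenterQuotient Q) where
  mul := Quotient.map₂ (· * ·) fun _ x ⟨c, hc, hx⟩ _ y ⟨d, hd, hy⟩ =>
    ⟨c * d, loopCenter.mul_mem hc hd, by rw [hx, hy, loopCenter.mul_mul_eq_mul_mul hc hd]⟩
  one := mk 1
  one_mul := ind fun x => congrArg mk (one_mul x)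
  mul_one := ind fun x => congrArg mk (mul_one x)
  bij_left := ind fun u => by
    refine ⟨fun x y => ?_, ind fun v => ?_⟩
    · induction x using ind with | h x => ?_
      induction y using ind with | h y => ?_
      intro h
      obtain ⟨c, hc, hxy⟩ := mk_eq_mk.1 h
      rw [← loopCenter.assoc_right hc] at hxy
      exact mk_eq_mk.2 ⟨c, hc, mul_left_cancel hxy⟩
    · obtain ⟨w, hw⟩ := (QLoop.bij_left u).2 v
      exact ⟨mk w, congrArg mk hw⟩
  bij_right := ind fun u => by
    refine ⟨fun x y => ?_, ind fun v => ?_⟩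
    · induction x using ind with | h x => ?_
      induction y using ind with | h y => ?_
      intro h
      obtain ⟨c, hc, hxy⟩ := mk_eq_mk.1 h
      rw [← loopCenter.assoc_right hc, ← loopCenter.comm hc, loopCenter.assoc_mid hc] at hxy
      exact mk_eq_mk.2 ⟨c, hc, mul_right_cancel hxy⟩
    · obtain ⟨w, hw⟩ := (QLoop.bij_right u).2 v
      exact ⟨mk w, congrArg mk hw⟩

lemma isRightBol (hbol : IsRightBol Q) :
    IsRightBol (CenterQuotient Q) := by
  intro x y z
  induction x using ind with | h x => ?_
  induction y using ind with | h y => ?_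
  induction z using ind with | h z => ?_
  exact congrArg mk (hbol x y z)

noncomputable def out (q : CenterQuotient Q) : Q := Quotient.out (s := centerSetoid Q) q

lemma mk_out (q : CenterQuotient Q) : mk (out q) = q := Quotient.out_eq q

open loopCenter in
lemma card_eq_card_mul_ncard : Nat.card Q = Nat.card (CenterQuotient Q) * (loopCenter Q).ncard := by
  have hbij : Function.Bijective fun p : CenterQuotient Q × loopCenter Q => out p.1 * p.2 := by
    refine ⟨fun ⟨q, c, hc⟩ ⟨q', c', hc'⟩ h => ?_, fun y => ?_⟩
    · dsimp only at h
      obtain ⟨d, hd, hcd⟩ := exists_mul_eq_one hc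
      obtain rfl : q = q' := by
        rw [← mk_out q, ← mk_out q', mk_eq_mk]
        exact ⟨c' * d, mul_mem hc' hd, by rw [assoc_mid hc', ← h, mul_mul_eq_self hc hcd]⟩
      obtain rfl := mul_left_cancel h
      rfl
    · obtain ⟨c, hc, hyc⟩ := mk_eq_mk.1 (mk_out (mk y))
      obtain ⟨d, hd, hcd⟩ := exists_mul_eq_one hc
      exact ⟨(mk y, ⟨d, hd⟩), by simp only [hyc, mul_mul_eq_self hc hcd]⟩
  rw [← Nat.card_coe_set_eq, ← Nat.card_prod, Nat.card_congr (Equiv.ofBijective _ hbij)]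

end CenterQuotient

section MainArgument

variable {Q : Type*} [QLoop Q]

/-- The central element and the element of `N` measuring the same commutator or associator
coincide by cancellation, so if `Z(Q) ∩ N` were trivial, `Q` would be an abelian group. -/
lemma exists_ne_one_mem_loopCenter_inter {N : Set Q} (hZ : loopCenter Q ≠ Set.univ)
    (hcommZ : ∀ x y : Q, ∃ c ∈ loopCenter Q, y * x = x * y * c)
    (hassocZ : ∀ x y z : Q, ∃ c ∈ loopCenter Q, x * (y * z) = x * y * z * c)
    (hab : ∀ x y z : Q, (∃ n ∈ N, y * x = (x * y) * n) ∧
      (∃ m ∈ N, x * (y * z) = ((x * y) * z) * m)) :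
    ∃ t ∈ loopCenter Q ∩ N, t ≠ 1 := by
  by_contra! htriv
  have key {u v : Q} (huZ : ∃ c ∈ loopCenter Q, u = v * c) (huN : ∃ n ∈ N, u = v * n) :
      u = v := by
    obtain ⟨c, hc, rfl⟩ := huZ
    obtain ⟨n, hn, h⟩ := huN
    obtain rfl := mul_left_cancel h
    rw [htriv c ⟨hc, hn⟩, mul_one]
  refine hZ (loopCenter.eq_univ_of_comm_assoc (fun x y => ?_) fun x y z => ?_)
  · exact (key (hcommZ x y) (hab x y y).1).symm
  · exact key (hassocZ x y z) (hab x y z).2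

lemma IsRightBol.loopCenter_subset_of_mem_inter [Finite Q] (hbol : IsRightBol Q)
    (hodd : Odd (Nat.card Q)) (hZ : (loopCenter Q).ncard = 3) {N : Set Q} (hN : IsSubloop N) {t : Q}
    (ht : t ∈ loopCenter Q ∩ N) (ht1 : t ≠ 1) : loopCenter Q ⊆ N := by
  have hpow : ∀ n, lpow t n ∈ loopCenter Q ∩ N := by
    intro n
    induction n with
    | zero => exact ⟨loopCenter.one_mem, hN.one_mem⟩
    | succ n ih => exact ⟨loopCenter.mul_mem ih.1 ht.1, hN.mul_mem ih.2 ht.2⟩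
  have hrange : Set.range (lpow t) ⊆ loopCenter Q := by
    rintro _ ⟨n, rfl⟩; exact (hpow n).1
  have hle : orderOf (Rt t) ≤ 3 := by
    rw [← hZ, ← hbol.ncard_range_lpow]; exact Set.ncard_le_ncard hrange
  have h3 : orderOf (Rt t) = 3 := by
    have hdvd := hbol.orderOf_Rt_dvd_card t
    have h1 : orderOf (Rt t) ≠ 1 := fun h =>
      ht1 (Rt_injective (by rw [orderOf_eq_one_iff.1 h, Rt_one]))
    have h0 := orderOf_pos (Rt t)
    interval_cases h : orderOf (Rt t)
    · exact absurd rfl h1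
    · exact absurd hdvd hodd.not_two_dvd_nat
    · rfl
  have heq := Set.eq_of_subset_of_ncard_le hrange (by rw [hZ, hbol.ncard_range_lpow, h3])
    (Set.toFinite _)
  rw [← heq]
  rintro _ ⟨n, rfl⟩
  exact (hpow n).2

end MainArgument

/-- In a right Bol loop of order 27 with center of order 3, any normal
subloop with abelian quotient contains the center. -/
theorem stmt11 (Q : Type*) [QLoop Q] (hbol : IsRightBol Q)
    (hcard : Nat.card Q = 27) (hZ : (loopCenter Q).ncard = 3)
    (N : Set Q) (hN : IsNormalSubloop N)
    (hab : ∀ x y z : Q, (∃ n ∈ N, y * x = (x * y) * n) ∧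
      (∃ m ∈ N, x * (y * z) = ((x * y) * z) * m)) :
    loopCenter Q ⊆ N := by
  have : Finite Q := Nat.finite_of_card_ne_zero (by omega)
  have h9 : Nat.card (CenterQuotient Q) = 9 := by
    have := CenterQuotient.card_eq_card_mul_ncard (Q := Q)
    rw [hcard, hZ] at this
    omega
  obtain ⟨hcomm, hassoc⟩ := (CenterQuotient.isRightBol hbol).comm_assoc_of_card_eq_nine h9
  have hZ_ne : loopCenter Q ≠ Set.univ := fun h => by
    rw [h, Set.ncard_univ, hcard] at hZ; omega
  obtain ⟨t, ht, ht1⟩ := exists_ne_one_mem_loopCenter_inter hZ_ne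
    (fun x y => CenterQuotient.mk_eq_mk.1 (hcomm (.mk x) (.mk y)).symm)
    (fun x y z => CenterQuotient.mk_eq_mk.1 (hassoc (.mk x) (.mk y) (.mk z))) hab
  exact hbol.loopCenter_subset_of_mem_inter (by rw [hcard]; decide) hZ hN.1 ht ht1
end

section
/- Let Q be a right Bol loop, let c ∈ Nucₗ(Q) and let c' ∈ Q satisfy c·c' = c'·c = 1. If a ∈ Q satisfies c·a = a·c and c·(a·a) = (a·a)·c', then c·c = 1. -/
namespace QLoop

variable {Q : Type*} [QLoop Q]

theorem mul_left_cancel {a x y : Q} (h : a * x = a * y) : x = y :=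
  (bij_left a).injective h

theorem mul_right_cancel {a x y : Q} (h : x * a = y * a) : x = y :=
  (bij_right a).injective h

theorem eq_one_of_mul_eq_self {a b : Q} (h : a * b = a) : b = 1 :=
  mul_left_cancel (h.trans (mul_one a).symm)

end QLoop

namespace IsRightBol

variable {Q : Type*} [QLoop Q]

theorem mul_mul_self (hbol : IsRightBol Q) (x y : Q) : (x * y) * y = x * (y * y) := by
  simpa only [QLoop.mul_one] using hbol x y 1

theorem mul_mul_cancel_of_mul_eq_one (hbol : IsRightBol Q) {y z : Q} (hyz : y * z = 1)
    (x : Q) : (x * y) * z = x := by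
  have h := hbol x y z
  rw [hyz, QLoop.one_mul] at h
  exact QLoop.mul_right_cancel h

end IsRightBol

theorem stmt15_general (Q : Type*) [QLoop Q] (hbol : IsRightBol Q)
    (c c' : Q) (hc : c ∈ leftNucleus Q) (hc'c : c' * c = 1)
    (a : Q) (ha : c * a = a * c) (ha2 : c * (a * a) = (a * a) * c') :
    c * c = 1 := by
  have hac_a : ((a * c) * a) * c = a * a := by
    rw [← ha, ← hc a a, ha2, hbol.mul_mul_cancel_of_mul_eq_one hc'c]
  have h : a * (a * (c * c)) = a * a := by
    rw [← hbol.mul_mul_self, ← ha, ← hbol a c a, hac_a]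
  exact QLoop.eq_one_of_mul_eq_self (QLoop.mul_left_cancel h)

/-- In a right Bol loop, if c is in the left nucleus with two-sided
inverse c', c commutes with a, and c*(a*a) = (a*a)*c', then c*c = 1. -/
theorem stmt15 (Q : Type*) [QLoop Q] (hbol : IsRightBol Q)
    (c c' : Q) (hc : c ∈ leftNucleus Q) (hcc' : c * c' = 1) (hc'c : c' * c = 1)
    (a : Q) (ha : c * a = a * c) (ha2 : c * (a * a) = (a * a) * c') :
    c * c = 1 :=
  stmt15_general Q hbol c c' hc hc'c a ha ha2
end
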